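/- arXiv:2512.23543 — 2 statements merged into one kernel-verified Lean document; each statement's English description precedes it below -/
import Mathlib

section
/- Let J be an adapted complex structure on a finite simple graph G, and let a and b be two edges of G sharing no common endpoint. If Ja = b, then both a and b are distinguished edges. -/
/-!  Framework: the 2-step nilpotent Lie algebra `𝔫_G` associated to a finite simple
graph `G` (Dani–Mainkar construction), and adapted complex structures on it. -/

open scoped BigOperators

namespace GraphLie

variable {V : Type*} [Fintype V] [LinearOrder V]

/-- The underlying real vector space of the Lie algebra `𝔫_G` associated to a graph `G`:
real-valued functions on its basis `V ⊕ G.edgeSet` (vertices and edges). -/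
abbrev Niln (G : SimpleGraph V) : Type _ := (V ⊕ G.edgeSet) → ℝ

variable (G : SimpleGraph V) [DecidableRel G.Adj]

/-- The basis vector of `𝔫_G` corresponding to the vertex `v`. -/
noncomputable def vtx (v : V) : Niln G := Pi.single (Sum.inl v) 1

/-- The basis vector of `𝔫_G` corresponding to the edge `e`. -/
noncomputable def edg (e : G.edgeSet) : Niln G := Pi.single (Sum.inr e) 1

/-- The basis vector of `𝔫_G` corresponding to a vertex or an edge. -/
noncomputable def basisVec (b : V ⊕ G.edgeSet) : Niln G := Pi.single b 1

/-- The bracket of two vertex generators: for adjacent vertices `i < j` (with respect to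
the chosen labeling of the vertices) `[v_i, v_j] = e_{i,j}` and `[v_j, v_i] = -e_{i,j}`;
non-adjacent vertices commute. -/
noncomputable def bracketVtx (i j : V) : Niln G :=
  if h : G.Adj i j then
    (if i < j then edg G ⟨s(i, j), G.mem_edgeSet.mpr h⟩
     else - edg G ⟨s(i, j), G.mem_edgeSet.mpr h⟩)
  else 0

/-- The Lie bracket of `𝔫_G`, extended bilinearly from the generators; all the
edge generators are central. -/
noncomputable def bracket (x y : Niln G) : Niln G :=
  ∑ i : V, ∑ j : V, (x (Sum.inl i) * y (Sum.inl j)) • bracketVtx G i j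

/-- An adapted complex structure on the graph `G`: a linear endomorphism `J` of `𝔫_G`
with `J ∘ J = -id`, whose Nijenhuis tensor vanishes, and which sends each basis vector
(vertex or edge) to plus or minus a basis vector. -/
structure AdaptedCS : Type _ where
  J : Niln G →ₗ[ℝ] Niln G
  j_squared : ∀ x, J (J x) = -x
  integrable : ∀ x y,
    bracket G x y + J (bracket G (J x) y + bracket G x (J y)) - bracket G (J x) (J y) = 0
  adapted : ∀ b : V ⊕ G.edgeSet,
    (∃ b', J (basisVec G b) = basisVec G b') ∨ (∃ b', J (basisVec G b) = - basisVec G b')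

variable {G}

/-- An edge of `G` joining vertices `v` and `w` is distinguished if `Jv = w` or `Jw = v`. -/
def AdaptedCS.Distinguished (Jc : AdaptedCS G) (e : G.edgeSet) : Prop :=
  ∃ v w : V, (e : Sym2 V) = s(v, w) ∧
    (Jc.J (vtx G v) = vtx G w ∨ Jc.J (vtx G w) = vtx G v)

end GraphLie

/-!
Write `a = s(v₁, v₂)` and `J a = δ b` with `δ ≠ 0`. Apply `J` to the Nijenhuis condition at
`(v₁, v₂)` and read off the `b`-coordinate: the mixed terms `[J v₁, v₂]` and `[v₁, J v₂]`
vanish there because `b` avoids `v₁` and `v₂`, so `J [J v₁, J v₂]` and `J [v₁, v₂] = ±δ b`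
have the same, nonzero, `b`-coordinate. Since `J` maps basis vectors to signed basis vectors,
`J v₁ = ±u₁` and `J v₂ = ±u₂` for vertices with `J s(u₁, u₂)` a multiple of `b`, so
`s(u₁, u₂) = a`. As `J` has no real eigenvector, `u₁ = v₂` and `u₂ = v₁`, and `J² = -1` forces
one of the two signs to be `+`. The same argument applies to `b`, since `J b = -a`.
-/

namespace GraphLie

variable {V : Type*} [Fintype V] [LinearOrder V] {G : SimpleGraph V} [DecidableRel G.Adj]

omit [Fintype V] [DecidableRel G.Adj] in
lemma vtx_ne_zero (v : V) : vtx G v ≠ 0 :=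
  Pi.single_ne_zero_iff.mpr one_ne_zero

lemma bracket_vtx_vtx (i j : V) : bracket G (vtx G i) (vtx G j) = bracketVtx G i j := by
  simp [bracket, vtx, Pi.single_apply, ite_smul]

omit [Fintype V] in
lemma bracketVtx_apply_inr_of_ne {i j : V} {e : G.edgeSet} (h : (e : Sym2 V) ≠ s(i, j)) :
    bracketVtx G i j (Sum.inr e) = 0 := by
  have hne : ∀ hij : G.Adj i j, Sum.inr e ≠ (Sum.inr ⟨s(i, j), G.mem_edgeSet.mpr hij⟩ :
      V ⊕ G.edgeSet) := fun _ he => h (congrArg Subtype.val (Sum.inr.inj he))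
  unfold bracketVtx edg
  split_ifs with hij
  · simp [hne hij]
  · simp [hne hij]
  · rfl

omit [Fintype V] in
lemma bracketVtx_of_adj {i j : V} (h : G.Adj i j) :
    ∃ τ : ℝ, τ ≠ 0 ∧ bracketVtx G i j = τ • edg G ⟨s(i, j), G.mem_edgeSet.mpr h⟩ := by
  unfold bracketVtx
  split_ifs
  · exact ⟨1, one_ne_zero, (one_smul ℝ _).symm⟩
  · exact ⟨-1, neg_ne_zero.mpr one_ne_zero, (neg_one_smul ℝ _).symm⟩

lemma bracket_vtx_right_apply_inr {u : V} {e : G.edgeSet} (hu : u ∉ (e : Sym2 V))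
    (x : Niln G) : bracket G x (vtx G u) (Sum.inr e) = 0 := by
  have hne (i : V) : (e : Sym2 V) ≠ s(i, u) := fun h => hu (h ▸ Sym2.mem_mk_right i u)
  simp [bracket, vtx, Pi.single_apply, Finset.sum_apply, bracketVtx_apply_inr_of_ne (hne _)]

lemma bracket_vtx_left_apply_inr {u : V} {e : G.edgeSet} (hu : u ∉ (e : Sym2 V))
    (x : Niln G) : bracket G (vtx G u) x (Sum.inr e) = 0 := by
  have hne (i : V) : (e : Sym2 V) ≠ s(u, i) := fun h => hu (h ▸ Sym2.mem_mk_left u i)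
  simp [bracket, vtx, Pi.single_apply, Finset.sum_apply, ite_smul, ite_apply,
    bracketVtx_apply_inr_of_ne (hne _)]

lemma exists_apply_bracketVtx_ne_zero (f : Niln G →ₗ[ℝ] Niln G) {x y : Niln G}
    {k : V ⊕ G.edgeSet} (h : f (bracket G x y) k ≠ 0) :
    ∃ i j, x (Sum.inl i) ≠ 0 ∧ y (Sum.inl j) ≠ 0 ∧ f (bracketVtx G i j) k ≠ 0 := by
  simp only [bracket, map_sum, map_smul, Finset.sum_apply, Pi.smul_apply, smul_eq_mul] at h
  obtain ⟨i, -, hi⟩ := Finset.exists_ne_zero_of_sum_ne_zero h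
  obtain ⟨j, -, hj⟩ := Finset.exists_ne_zero_of_sum_ne_zero hi
  simp only [mul_ne_zero_iff] at hj
  exact ⟨i, j, hj.1.1, hj.1.2, hj.2⟩

namespace AdaptedCS

variable (Jc : AdaptedCS G)

lemma J_injective : Function.Injective Jc.J := fun x y h => by
  simpa [Jc.j_squared] using congrArg Jc.J h

lemma J_ne_smul_self {x : Niln G} (hx : x ≠ 0) (s : ℝ) : Jc.J x ≠ s • x := by
  intro h
  have h2 : (s * s + 1) • x = 0 := by
    rw [add_smul, one_smul, ← smul_smul, ← h, ← map_smul, ← h, Jc.j_squared, neg_add_cancel]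
  exact hx ((smul_eq_zero.mp h2).resolve_left
    (add_pos_of_nonneg_of_pos (mul_self_nonneg s) one_pos).ne')

lemma J_basisVec_eq_of_apply_ne_zero {p q : V ⊕ G.edgeSet} (h : Jc.J (basisVec G p) q ≠ 0) :
    ∃ s : ℝ, (s = 1 ∨ s = -1) ∧ Jc.J (basisVec G p) = s • basisVec G q := by
  rcases Jc.adapted p with ⟨q', hq'⟩ | ⟨q', hq'⟩ <;> rw [hq'] at h ⊢ <;>
    obtain rfl : q = q' := by by_contra hne; simp [basisVec, hne] at h
  · exact ⟨1, Or.inl rfl, (one_smul ℝ _).symm⟩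
  · exact ⟨-1, Or.inr rfl, (neg_one_smul ℝ _).symm⟩

lemma eq_of_J_basisVec_apply_ne_zero {p p' q : V ⊕ G.edgeSet} {δ : ℝ} (hδ : δ ≠ 0)
    (hp' : Jc.J (basisVec G p') = δ • basisVec G q) (h : Jc.J (basisVec G p) q ≠ 0) :
    p = p' := by
  obtain ⟨s, -, hp⟩ := Jc.J_basisVec_eq_of_apply_ne_zero h
  have hJ : Jc.J (δ • basisVec G p) = Jc.J (s • basisVec G p') := by
    rw [map_smul, map_smul, hp, hp', smul_smul, smul_smul, mul_comm]
  have := congrFun (Jc.J_injective hJ) p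
  by_contra hne
  simp [basisVec, hne, hδ] at this

lemma J_vtx_eq_or_of_swap {v w : V} {s t : ℝ} (hs : s = 1 ∨ s = -1) (ht : t = 1 ∨ t = -1)
    (hv : Jc.J (vtx G v) = s • vtx G w) (hw : Jc.J (vtx G w) = t • vtx G v) :
    Jc.J (vtx G v) = vtx G w ∨ Jc.J (vtx G w) = vtx G v := by
  have hst : s * t = -1 := by
    have h := congrFun (Jc.j_squared (vtx G v)) (Sum.inl v)
    rw [hv, map_smul, hw, smul_smul] at h
    simpa [vtx] using h
  rcases hs with rfl | rfl
  · exact Or.inl (by rw [hv, one_smul])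
  · obtain rfl : t = 1 := by linarith
    exact Or.inr (by rw [hw, one_smul])

lemma J_bracket_J_vtx_apply {v₁ v₂ : V} {e : G.edgeSet} (h₁ : v₁ ∉ (e : Sym2 V))
    (h₂ : v₂ ∉ (e : Sym2 V)) :
    Jc.J (bracket G (Jc.J (vtx G v₁)) (Jc.J (vtx G v₂))) (Sum.inr e) =
      Jc.J (bracketVtx G v₁ v₂) (Sum.inr e) := by
  have h := congrFun (congrArg Jc.J (Jc.integrable (vtx G v₁) (vtx G v₂))) (Sum.inr e)
  simp only [map_sub, map_add, Jc.j_squared, map_zero, Pi.sub_apply, Pi.add_apply,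
    Pi.neg_apply, Pi.zero_apply, bracket_vtx_right_apply_inr h₂,
    bracket_vtx_left_apply_inr h₁, bracket_vtx_vtx] at h
  linarith

variable {Jc} {a b : G.edgeSet} {δ : ℝ}

lemma J_bracketVtx_apply_ne_zero_iff (hδ : δ ≠ 0) (hab : Jc.J (edg G a) = δ • edg G b)
    (i j : V) : Jc.J (bracketVtx G i j) (Sum.inr b) ≠ 0 ↔ (a : Sym2 V) = s(i, j) := by
  constructor
  · intro h
    by_cases hij : G.Adj i j
    · obtain ⟨τ, -, hτ⟩ := bracketVtx_of_adj hij
      rw [hτ, map_smul, Pi.smul_apply, smul_eq_mul] at h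
      have := Jc.eq_of_J_basisVec_apply_ne_zero hδ hab (right_ne_zero_of_mul h)
      exact congrArg Subtype.val (Sum.inr.inj this).symm
    · simp [bracketVtx, hij] at h
  · intro ha
    obtain ⟨τ, hτ, hbr⟩ := bracketVtx_of_adj (G.mem_edgeSet.mp (ha ▸ a.2))
    rw [hbr, show (⟨s(i, j), _⟩ : G.edgeSet) = a from Subtype.ext ha.symm, map_smul, hab]
    simp [edg, hτ, hδ]

theorem distinguished_of_J_edg_eq_smul (hδ : δ ≠ 0)
    (hdisj : ∀ x : V, x ∈ (a : Sym2 V) → x ∉ (b : Sym2 V))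
    (hab : Jc.J (edg G a) = δ • edg G b) : Jc.Distinguished a := by
  obtain ⟨v₁, v₂, ha⟩ : ∃ v₁ v₂, (a : Sym2 V) = s(v₁, v₂) := Sym2.exists.mp ⟨_, rfl⟩
  have hne : Jc.J (bracket G (Jc.J (vtx G v₁)) (Jc.J (vtx G v₂))) (Sum.inr b) ≠ 0 := by
    rw [Jc.J_bracket_J_vtx_apply (hdisj v₁ (ha ▸ Sym2.mem_mk_left _ _))
      (hdisj v₂ (ha ▸ Sym2.mem_mk_right _ _))]
    exact (J_bracketVtx_apply_ne_zero_iff hδ hab v₁ v₂).mpr ha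
  obtain ⟨i, j, hi, hj, hij⟩ := exists_apply_bracketVtx_ne_zero Jc.J hne
  obtain ⟨s, hs, hJv₁⟩ := Jc.J_basisVec_eq_of_apply_ne_zero hi
  obtain ⟨t, ht, hJv₂⟩ := Jc.J_basisVec_eq_of_apply_ne_zero hj
  rcases Sym2.eq_iff.mp (ha.symm.trans ((J_bracketVtx_apply_ne_zero_iff hδ hab i j).mp hij))
    with ⟨rfl, -⟩ | ⟨rfl, rfl⟩
  · exact absurd hJv₁ (Jc.J_ne_smul_self (vtx_ne_zero v₁) s)
  · exact ⟨v₁, v₂, ha, Jc.J_vtx_eq_or_of_swap hs ht hJv₁ hJv₂⟩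

end AdaptedCS

/-- If `a` and `b` are two edges of `G` sharing no common endpoint and
`Ja = b`, then both `a` and `b` are distinguished. -/
theorem statement3 (Jc : AdaptedCS G) (a b : G.edgeSet)
    (hdisj : ∀ x : V, x ∈ (a : Sym2 V) → x ∉ (b : Sym2 V))
    (hab : Jc.J (edg G a) = edg G b) :
    Jc.Distinguished a ∧ Jc.Distinguished b := by
  have hba : Jc.J (edg G b) = (-1 : ℝ) • edg G a := by
    rw [← hab, Jc.j_squared, neg_one_smul]
  exact ⟨Jc.distinguished_of_J_edg_eq_smul one_ne_zero hdisj (by rw [hab, one_smul]),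
    Jc.distinguished_of_J_edg_eq_smul (neg_ne_zero.mpr one_ne_zero)
      (fun x hb ha => hdisj x ha hb) hba⟩

end GraphLie
end

section
/- Let J be an adapted complex structure on a finite simple graph G. If v and w are vertices of G with w = Jv and the graph distance between v and w is at least 3 (in particular if they lie in distinct connected components), then both deg(v) and deg(w) are even. -/
/-!  Framework: the 2-step nilpotent Lie algebra `𝔫_G` associated to a finite simple
graph `G` (Dani–Mainkar construction), and adapted complex structures on it. -/

open scoped BigOperators

/-! Up to sign, `J` permutes the basis `V ∪ E` of `𝔫_G` by a fixed-point-free involution,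
since `J² = -1`. Let `w = Jv` with `d(v, w) ≥ 3`, so that `v, w` are neither adjacent nor have
a common neighbour. For a neighbour `u` of `v`, the Nijenhuis condition at `(v, u)` shows that
`Ju` is `±` a neighbour of `v`. Hence the involution pairs off the neighbours of `v`, and
`deg v` is even; the same holds for `w`, as `Jw = -v`. -/

theorem Finset.even_card_of_involution {α : Type*} {s : Finset α} (g : α → α)
    (hg_mem : ∀ a ∈ s, g a ∈ s) (hg_invol : ∀ a ∈ s, g (g a) = a) (hg_ne : ∀ a ∈ s, g a ≠ a) :
    Even s.card := by
  rw [← ZMod.natCast_eq_zero_iff_even, Finset.card_eq_sum_ones, Nat.cast_sum]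
  exact Finset.sum_involution (fun a _ => g a) (fun _ _ => by decide) (fun a ha _ => hg_ne a ha)
    hg_mem hg_invol

theorem SimpleGraph.three_le_length_of_far {V : Type*} {G : SimpleGraph V} {v w : V}
    (hd : ¬ G.Reachable v w ∨ 3 ≤ G.dist v w) (p : G.Walk v w) : 3 ≤ p.length := by
  rcases hd with hr | hdist
  · exact absurd ⟨p⟩ hr
  · exact hdist.trans (SimpleGraph.dist_le p)

namespace GraphLie

section Generators

variable {V : Type*} [LinearOrder V] {G : SimpleGraph V}

theorem eq_of_smul_basisVec_eq {s t : ℝ} {b b' : V ⊕ G.edgeSet} (hs : s ≠ 0)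
    (h : s • basisVec G b = t • basisVec G b') : b = b' := by
  by_contra hne
  have := congrFun h b
  simp [basisVec, hne, hs] at this

theorem mul_self_smul_basisVec_ne_neg {s : ℝ} (b : V ⊕ G.edgeSet) :
    (s * s) • basisVec G b ≠ -basisVec G b := by
  intro h
  have := congrFun h b
  simp only [basisVec, Pi.smul_apply, Pi.neg_apply, Pi.single_eq_same, smul_eq_mul, mul_one] at this
  nlinarith [mul_self_nonneg s]

variable [DecidableRel G.Adj]

theorem bracketVtx_of_not_adj {i j : V} (h : ¬ G.Adj i j) : bracketVtx G i j = 0 := dif_neg h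

theorem bracketVtx_apply_of_ne {i j : V} {e : G.edgeSet} (he : (e : Sym2 V) ≠ s(i, j)) :
    bracketVtx G i j (.inr e) = 0 := by
  unfold bracketVtx edg
  split_ifs <;> simp [Subtype.ext_iff, he]

theorem bracketVtx_apply_self_ne_zero {i j : V} (h : G.Adj i j) :
    bracketVtx G i j (.inr ⟨s(i, j), G.mem_edgeSet.mpr h⟩) ≠ 0 := by
  unfold bracketVtx edg
  split_ifs <;> simp

theorem sym2_eq_of_bracketVtx_eq_smul {i j k l : V} {c : ℝ} (h : G.Adj i j)
    (hc : bracketVtx G i j = c • bracketVtx G k l) : s(i, j) = s(k, l) := by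
  by_contra hne
  have := congrFun hc (.inr ⟨s(i, j), G.mem_edgeSet.mpr h⟩)
  rw [Pi.smul_apply, bracketVtx_apply_of_ne (i := k) (j := l) hne, smul_zero] at this
  exact bracketVtx_apply_self_ne_zero h this

variable [Fintype V]

theorem bracket_smul_left (c : ℝ) (x y : Niln G) :
    bracket G (c • x) y = c • bracket G x y := by
  simp only [bracket, Pi.smul_apply, smul_eq_mul, Finset.smul_sum, smul_smul, mul_assoc]

theorem bracket_smul_right (c : ℝ) (x y : Niln G) :
    bracket G x (c • y) = c • bracket G x y := by
  simp only [bracket, Pi.smul_apply, smul_eq_mul, Finset.smul_sum, smul_smul, mul_left_comm]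

theorem bracket_basisVec_inl (i j : V) :
    bracket G (basisVec G (.inl i)) (basisVec G (.inl j)) = bracketVtx G i j := by
  simp [bracket, basisVec, Pi.single_apply, ite_smul, Finset.sum_ite_eq']

theorem bracket_basisVec_inr (x : Niln G) (e : G.edgeSet) :
    bracket G x (basisVec G (.inr e)) = 0 := by
  simp [bracket, basisVec]

end Generators

namespace AdaptedCS

variable {V : Type*} [Fintype V] [LinearOrder V] {G : SimpleGraph V} [DecidableRel G.Adj]
  (Jc : AdaptedCS G)

theorem exists_J_basisVec (b : V ⊕ G.edgeSet) :
    ∃ (b' : V ⊕ G.edgeSet) (η : ℝ), η ≠ 0 ∧ Jc.J (basisVec G b) = η • basisVec G b' := by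
  rcases Jc.adapted b with ⟨b', h⟩ | ⟨b', h⟩
  · exact ⟨b', 1, one_ne_zero, by rw [h, one_smul]⟩
  · exact ⟨b', -1, by norm_num, by rw [h, neg_one_smul]⟩

noncomputable def target (b : V ⊕ G.edgeSet) : V ⊕ G.edgeSet :=
  (Jc.exists_J_basisVec b).choose

theorem J_basisVec (b : V ⊕ G.edgeSet) :
    ∃ η : ℝ, η ≠ 0 ∧ Jc.J (basisVec G b) = η • basisVec G (Jc.target b) :=
  (Jc.exists_J_basisVec b).choose_spec

theorem target_eq_of_J_basisVec {b b' : V ⊕ G.edgeSet} {η : ℝ}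
    (h : Jc.J (basisVec G b) = η • basisVec G b') : Jc.target b = b' := by
  obtain ⟨η', hη', h'⟩ := Jc.J_basisVec b
  exact eq_of_smul_basisVec_eq hη' (h'.symm.trans h)

theorem target_target (b : V ⊕ G.edgeSet) : Jc.target (Jc.target b) = b := by
  obtain ⟨η, hη, hb⟩ := Jc.J_basisVec b
  obtain ⟨η', hη', hb'⟩ := Jc.J_basisVec (Jc.target b)
  have hJJ := Jc.j_squared (basisVec G b)
  rw [hb, map_smul, hb', smul_smul, ← neg_one_smul ℝ (basisVec G b)] at hJJ
  exact eq_of_smul_basisVec_eq (mul_ne_zero hη hη') hJJ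

theorem target_ne (b : V ⊕ G.edgeSet) : Jc.target b ≠ b := by
  intro hfix
  obtain ⟨η, -, hb⟩ := Jc.J_basisVec b
  rw [hfix] at hb
  have hJJ := Jc.j_squared (basisVec G b)
  rw [hb, map_smul, hb, smul_smul] at hJJ
  exact mul_self_smul_basisVec_ne_neg b hJJ

/-- In the Nijenhuis condition at `(v, u)` the term `[Jv, u]` vanishes, so the edge `[v, u]`
must be cancelled by `J[v, Ju]` or `[Jv, Ju]`; the latter would need `{v, u} = {w, u'}`. -/
theorem target_neighbor {v w u : V} (hvw : Jc.target (.inl v) = .inl w) (hnadj : ¬ G.Adj v w)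
    (hcommon : ∀ u, G.Adj v u → ¬ G.Adj w u) (hu : G.Adj v u) :
    ∃ u', Jc.target (.inl u) = .inl u' ∧ G.Adj v u' := by
  obtain ⟨ε, -, hJv⟩ := Jc.J_basisVec (.inl v)
  obtain ⟨η, -, hJu⟩ := Jc.J_basisVec (.inl u)
  rw [hvw] at hJv
  have hN := Jc.integrable (basisVec G (.inl v)) (basisVec G (.inl u))
  simp only [hJv, hJu, bracket_smul_left, bracket_smul_right, bracket_basisVec_inl,
    bracketVtx_of_not_adj (hcommon u hu), smul_zero, zero_add] at hN
  rcases htarget : Jc.target (.inl u) with u' | e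
  · refine ⟨u', rfl, ?_⟩
    by_contra hvu'
    simp only [htarget, bracket_basisVec_inl, bracketVtx_of_not_adj hvu', smul_zero, map_zero,
      add_zero, sub_eq_zero, smul_smul] at hN
    rcases Sym2.eq_iff.mp (sym2_eq_of_bracketVtx_eq_smul hu hN) with ⟨rfl, -⟩ | ⟨-, rfl⟩
    · exact hcommon u hu hu
    · exact hnadj hu
  · simp only [htarget, bracket_basisVec_inr, smul_zero, map_zero, add_zero, sub_zero] at hN
    exact (bracketVtx_apply_self_ne_zero hu (congrFun hN _)).elim

theorem even_degree {v w : V} (hvw : Jc.target (.inl v) = .inl w) (hnadj : ¬ G.Adj v w)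
    (hcommon : ∀ u, G.Adj v u → ¬ G.Adj w u) : Even (G.degree v) := by
  rw [← SimpleGraph.card_neighborFinset_eq_degree, ← Finset.card_map Function.Embedding.inl]
  refine Finset.even_card_of_involution Jc.target ?_ (fun b _ => Jc.target_target b)
    (fun b _ => Jc.target_ne b)
  simp only [Finset.mem_map, SimpleGraph.mem_neighborFinset, Function.Embedding.inl_apply]
  rintro _ ⟨u, hu, rfl⟩
  obtain ⟨u', hu', hvu'⟩ := Jc.target_neighbor hvw hnadj hcommon hu
  exact ⟨u', hvu', hu'.symm⟩

end AdaptedCS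

variable {V : Type*} [Fintype V] [LinearOrder V] {G : SimpleGraph V} [DecidableRel G.Adj]

/-- If `v` and `w` are vertices of `G` with `w = Jv` at graph distance
at least `3` (in particular if they lie in distinct connected components), then both
`deg v` and `deg w` are even. -/
theorem statement9 (Jc : AdaptedCS G) (v w : V)
    (hvw : Jc.J (vtx G v) = vtx G w)
    (hd : ¬ G.Reachable v w ∨ 3 ≤ G.dist v w) :
    Even (G.degree v) ∧ Even (G.degree w) := by
  have hnadj : ¬ G.Adj v w := fun h => by
    simpa using SimpleGraph.three_le_length_of_far hd h.toWalk
  have hcommon : ∀ u, G.Adj v u → ¬ G.Adj w u := fun u hvu hwu => by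
    simpa using SimpleGraph.three_le_length_of_far hd (.cons hvu hwu.symm.toWalk)
  have hvw' : Jc.target (.inl v) = .inl w :=
    Jc.target_eq_of_J_basisVec (η := 1) (by rw [one_smul]; exact hvw)
  have hwv : Jc.target (.inl w) = .inl v := by rw [← hvw', Jc.target_target]
  exact ⟨Jc.even_degree hvw' hnadj hcommon,
    Jc.even_degree hwv (fun h => hnadj h.symm) fun u hwu hvu => hcommon u hvu hwu⟩

end GraphLie
end
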